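/- arXiv:2305.06765 — 4 statements merged into one kernel-verified Lean document; each statement's English description precedes it below -/
import Mathlib

section
/- The lower Dini derivative D^- f(x) is superlinear (superadditive and positively homogeneous) if and only if D^- f(x)(u) = D^-_M f(x)(u) for all u ∈ E. -/
/-!
`D⁻ f(x)` is always positively homogeneous: `D⁻ f(x)(c • u)` is the liminf of
`c` times the quotients in direction `u` at rescaled times, and a liminf over `0⁺` commutes with
both the rescaling and multiplication by `c > 0`. So superlinearity is just superadditivity, and for
`g` with `g 0 = 0` superadditivity says `g u ≤ g (u + w) - g w` for all `w`, with equality at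
`w = 0`, i.e. that the infimum defining `D⁻_M f(x)(u)` equals `g u`.
-/

open Filter Topology

variable {E : Type*} [NormedAddCommGroup E] [NormedSpace ℝ E]

/-- Difference quotient of `f` at `x` in direction `u`. -/
noncomputable def diniQuot (f : E → ℝ) (x u : E) : ℝ → ℝ :=
  fun t => (f (x + t • u) - f x) / t

/-- Lower Dini derivative `D⁻ f(x)(u)`. -/
noncomputable def lowerDini (f : E → ℝ) (x u : E) : ℝ :=
  liminf (diniQuot f x u) (𝓝[>] 0)

/-- Upper Dini derivative `D⁺ f(x)(u)`. -/
noncomputable def upperDini (f : E → ℝ) (x u : E) : ℝ :=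
  limsup (diniQuot f x u) (𝓝[>] 0)

/-- Modified lower Dini derivative `D⁻_M f(x)(u)`. -/
noncomputable def lowerDiniM (f : E → ℝ) (x u : E) : ℝ :=
  ⨅ w : E, (lowerDini f x (u + w) - lowerDini f x w)

/-- Modified upper Dini derivative `D⁺_M f(x)(u)`. -/
noncomputable def upperDiniM (f : E → ℝ) (x u : E) : ℝ :=
  ⨆ w : E, (upperDini f x (u + w) - upperDini f x w)

/-- The difference quotients of `f` at `x` in direction `u` are bounded near `0⁺`,
so that the lower/upper Dini derivatives are genuine (finite) values. -/
def DiniFinite (f : E → ℝ) (x u : E) : Prop :=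
  IsBoundedUnder (· ≤ ·) (𝓝[>] (0:ℝ)) (diniQuot f x u) ∧
  IsBoundedUnder (· ≥ ·) (𝓝[>] (0:ℝ)) (diniQuot f x u)

/-- Finiteness of the modified lower Dini derivative. -/
def LowerDiniMFinite (f : E → ℝ) (x u : E) : Prop :=
  BddBelow (Set.range fun w : E => lowerDini f x (u + w) - lowerDini f x w)

/-- Finiteness of the modified upper Dini derivative. -/
def UpperDiniMFinite (f : E → ℝ) (x u : E) : Prop :=
  BddAbove (Set.range fun w : E => upperDini f x (u + w) - upperDini f x w)

open scoped Pointwise in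
/-- `Real.sSup_smul_of_nonneg` holds for every set, so this also covers the junk value `0` of an
unbounded liminf. -/
theorem Real.liminf_const_mul {α : Type*} (l : Filter α) (u : α → ℝ) {c : ℝ} (hc : 0 < c) :
    liminf (fun a => c * u a) l = c * liminf u l := by
  have hbounds : {b | ∀ᶠ a in l, b ≤ c * u a} = c • {b | ∀ᶠ a in l, b ≤ u a} := by
    ext b
    simp only [Set.mem_smul_set_iff_inv_smul_mem₀ hc.ne', Set.mem_ofPred_eq, smul_eq_mul,
      inv_mul_le_iff₀ hc]
  rw [liminf_eq, liminf_eq, hbounds, Real.sSup_smul_of_nonneg hc.le, smul_eq_mul]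

theorem map_const_mul_nhdsGT_zero {c : ℝ} (hc : 0 < c) : map (c * ·) (𝓝[>] (0 : ℝ)) = 𝓝[>] 0 := by
  rw [map_eq_comap_of_inverse (n := (c⁻¹ * ·)), comap_mulLeft_nhdsGT_zero (inv_pos.2 hc)]
  · ext t; simp [hc.ne']
  · ext t; simp [hc.ne']

section Dini

variable (f : E → ℝ) (x : E)

theorem diniQuot_smul (u : E) (c : ℝ) :
    diniQuot f x (c • u) = fun t => c * diniQuot f x u (c * t) := by
  funext t
  rcases eq_or_ne c 0 with rfl | hc
  · simp [diniQuot]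
  rcases eq_or_ne t 0 with rfl | ht
  · simp [diniQuot]
  simp only [diniQuot, smul_smul, mul_comm t c]
  field_simp

theorem lowerDini_zero : lowerDini f x 0 = 0 := by
  have : diniQuot f x 0 = fun _ => 0 := by simpa using diniQuot_smul f x 0 0
  rw [lowerDini, this, liminf_const]

theorem lowerDini_smul_of_pos (u : E) {c : ℝ} (hc : 0 < c) :
    lowerDini f x (c • u) = c * lowerDini f x u := by
  calc lowerDini f x (c • u)
      = liminf (fun s => c * diniQuot f x u s) (map (c * ·) (𝓝[>] 0)) := by
        rw [lowerDini, diniQuot_smul]; rfl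
    _ = c * lowerDini f x u := by
        rw [map_const_mul_nhdsGT_zero hc, Real.liminf_const_mul _ _ hc, lowerDini]

theorem lowerDini_smul_of_nonneg (u : E) {c : ℝ} (hc : 0 ≤ c) :
    lowerDini f x (c • u) = c * lowerDini f x u := by
  rcases hc.eq_or_lt with rfl | hc
  · simp [lowerDini_zero]
  · exact lowerDini_smul_of_pos f x u hc

end Dini

theorem superadditive_iff_eq_iInf_sub {M : Type*} [AddZeroClass M] {g : M → ℝ} (hg : g 0 = 0)
    (hbdd : ∀ u, BddBelow (Set.range fun w => g (u + w) - g w)) :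
    (∀ u v, g u + g v ≤ g (u + v)) ↔ ∀ u, g u = ⨅ w, (g (u + w) - g w) := by
  constructor
  · intro hsup u
    refine le_antisymm (le_ciInf fun w => by linarith [hsup u w]) ?_
    simpa [hg] using ciInf_le (hbdd u) 0
  · intro heq u v
    have := heq u ▸ ciInf_le (hbdd u) v
    linarith

theorem lowerDini_superlinear_iff_eq_lowerDiniM_general (f : E → ℝ) (x : E)
    (hMfin : ∀ u : E, LowerDiniMFinite f x u) :
    ((∀ (c : ℝ), 0 ≤ c → ∀ u : E, lowerDini f x (c • u) = c * lowerDini f x u) ∧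
      (∀ u v : E, lowerDini f x u + lowerDini f x v ≤ lowerDini f x (u + v))) ↔
    (∀ u : E, lowerDini f x u = lowerDiniM f x u) :=
  (and_iff_right fun _ hc u => lowerDini_smul_of_nonneg f x u hc).trans
    (superadditive_iff_eq_iInf_sub (lowerDini_zero f x) hMfin)

/-- `D⁻ f(x)` is superlinear iff it coincides with `D⁻_M f(x)`. -/
theorem lowerDini_superlinear_iff_eq_lowerDiniM (f : E → ℝ) (x : E)
    (hfin : ∀ u : E, DiniFinite f x u)
    (hMfin : ∀ u : E, LowerDiniMFinite f x u) :
    ((∀ (c : ℝ), 0 ≤ c → ∀ u : E, lowerDini f x (c • u) = c * lowerDini f x u) ∧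
      (∀ u v : E, lowerDini f x u + lowerDini f x v ≤ lowerDini f x (u + v))) ↔
    (∀ u : E, lowerDini f x u = lowerDiniM f x u) :=
  lowerDini_superlinear_iff_eq_lowerDiniM_general f x hMfin
end

section
/- If f : E → ℝ is L-Lipschitz on a neighborhood of x in a normed space E, then f is D^-_M-differentiable and D^+_M-differentiable at x, and the maps u ↦ D^-_M f(x)(u) and u ↦ D^+_M f(x)(u) are L-Lipschitz on E. -/
open Filter Topology

variable {E : Type*} [NormedAddCommGroup E] [NormedSpace ℝ E]

/-!
A Lipschitz bound `|f y - f z| ≤ L ‖y - z‖` near `x` gives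
`|(f (x + t u) - f (x + t v)) / t| ≤ L ‖u - v‖` for small `t > 0`, so the difference quotients are
bounded and both Dini derivatives `D^± f(x)` are `L`-Lipschitz in the direction. For any
`L`-Lipschitz `g`, each `u ↦ g (u + w) - g w` is `L`-Lipschitz and bounded in absolute value by
`L ‖u‖`; hence their infimum and supremum over `w` exist and are again `L`-Lipschitz.
-/

open Set

section LiminfLimsup

variable {α : Type*} {l : Filter α} [l.NeBot] {φ ψ : α → ℝ} {c : ℝ}

theorem liminf_le_liminf_add_of_eventually_le (hφ : IsBoundedUnder (· ≥ ·) l φ)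
    (hψ_le : IsBoundedUnder (· ≤ ·) l ψ) (hψ_ge : IsBoundedUnder (· ≥ ·) l ψ)
    (h : ∀ᶠ a in l, φ a ≤ ψ a + c) : liminf φ l ≤ liminf ψ l + c := by
  obtain ⟨b, hb⟩ := hψ_le
  have hcobdd : IsCoboundedUnder (· ≥ ·) l fun a => ψ a + c :=
    isCoboundedUnder_ge_of_eventually_le l (x := b + c) <| by
      filter_upwards [hb] with a ha using add_le_add_left ha c
  calc liminf φ l ≤ liminf (fun a => ψ a + c) l := liminf_le_liminf h hφ hcobdd
    _ = liminf ψ l + c :=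
      liminf_add_const l ψ c (isBoundedUnder_of_eventually_le hb).isCoboundedUnder_ge hψ_ge

theorem limsup_le_limsup_add_of_eventually_le (hφ : IsBoundedUnder (· ≥ ·) l φ)
    (hψ_le : IsBoundedUnder (· ≤ ·) l ψ) (hψ_ge : IsBoundedUnder (· ≥ ·) l ψ)
    (h : ∀ᶠ a in l, φ a ≤ ψ a + c) : limsup φ l ≤ limsup ψ l + c := by
  obtain ⟨b, hb⟩ := hψ_le
  have hbdd : IsBoundedUnder (· ≤ ·) l fun a => ψ a + c :=
    isBoundedUnder_of_eventually_le (a := b + c) <| by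
      filter_upwards [hb] with a ha using add_le_add_left ha c
  calc limsup φ l ≤ limsup (fun a => ψ a + c) l := limsup_le_limsup h hφ.isCoboundedUnder_le hbdd
    _ = limsup ψ l + c :=
      limsup_add_const l ψ c (isBoundedUnder_of_eventually_le hb) hψ_ge.isCoboundedUnder_le

end LiminfLimsup

section TranslationDifferences

variable {F : Type*} [SeminormedAddCommGroup F] {g : F → ℝ} {L : NNReal}

theorem LipschitzWith.abs_sub_translate_le (hg : LipschitzWith L g) (u w : F) :
    |g (u + w) - g w| ≤ L * ‖u‖ := by
  simpa [Real.dist_eq, dist_eq_norm] using hg.dist_le_mul (u + w) w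

theorem LipschitzWith.bddBelow_range_sub_translate (hg : LipschitzWith L g) (u : F) :
    BddBelow (range fun w => g (u + w) - g w) :=
  ⟨-(L * ‖u‖), forall_mem_range.2 fun w => (abs_le.1 (hg.abs_sub_translate_le u w)).1⟩

theorem LipschitzWith.bddAbove_range_sub_translate (hg : LipschitzWith L g) (u : F) :
    BddAbove (range fun w => g (u + w) - g w) :=
  ⟨L * ‖u‖, forall_mem_range.2 fun w => (abs_le.1 (hg.abs_sub_translate_le u w)).2⟩

theorem LipschitzWith.sub_translate (hg : LipschitzWith L g) (w : F) :
    LipschitzWith L fun u => g (u + w) - g w :=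
  LipschitzWith.of_le_add_mul L fun u v => by
    have h := hg.le_add_mul (u + w) (v + w)
    rw [dist_add_right] at h
    linarith

theorem LipschitzWith.iInf_sub_translate (hg : LipschitzWith L g) :
    LipschitzWith L fun u => ⨅ w, (g (u + w) - g w) := by
  refine LipschitzWith.of_le_add_mul L fun u v => ?_
  rw [← sub_le_iff_le_add]
  refine le_ciInf fun w => sub_le_iff_le_add.2 ?_
  calc ⨅ w, (g (u + w) - g w) ≤ g (u + w) - g w := ciInf_le (hg.bddBelow_range_sub_translate u) w
    _ ≤ g (v + w) - g w + L * dist u v := (hg.sub_translate w).le_add_mul u v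

theorem LipschitzWith.iSup_sub_translate (hg : LipschitzWith L g) :
    LipschitzWith L fun u => ⨆ w, (g (u + w) - g w) := by
  refine LipschitzWith.of_le_add_mul L fun u v => ciSup_le fun w => ?_
  calc g (u + w) - g w ≤ g (v + w) - g w + L * dist u v := (hg.sub_translate w).le_add_mul u v
    _ ≤ (⨆ w, (g (v + w) - g w)) + L * dist u v := by
      gcongr
      exact le_ciSup (hg.bddAbove_range_sub_translate v) w

end TranslationDifferences

section Dini

variable {f : E → ℝ} {x : E} {L : NNReal} {s : Set E}

theorem eventually_add_smul_mem (hs : s ∈ 𝓝 x) (u : E) : ∀ᶠ t in 𝓝 (0 : ℝ), x + t • u ∈ s :=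
  (continuous_const.add (continuous_id.smul continuous_const)).tendsto' 0 x (by simp) hs

theorem diniQuot_sub_diniQuot (f : E → ℝ) (x u v : E) (t : ℝ) :
    diniQuot f x u t - diniQuot f x v t = (f (x + t • u) - f (x + t • v)) / t := by
  simp only [diniQuot]
  ring

theorem LipschitzOnWith.eventually_abs_diniQuot_sub_le (hf : LipschitzOnWith L f s)
    (hs : s ∈ 𝓝 x) (u v : E) :
    ∀ᶠ t in 𝓝[>] (0 : ℝ), |diniQuot f x u t - diniQuot f x v t| ≤ L * ‖u - v‖ := by
  filter_upwards [nhdsWithin_le_nhds (eventually_add_smul_mem hs u),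
    nhdsWithin_le_nhds (eventually_add_smul_mem hs v), self_mem_nhdsWithin]
    with t hu hv (ht : 0 < t)
  have hdist : dist (x + t • u) (x + t • v) = t * ‖u - v‖ := by
    rw [dist_add_left, dist_eq_norm, ← smul_sub, norm_smul, Real.norm_of_nonneg ht.le]
  have hlip := hf.dist_le_mul _ hu _ hv
  rw [hdist, Real.dist_eq] at hlip
  rw [diniQuot_sub_diniQuot, abs_div, abs_of_pos ht, div_le_iff₀ ht]
  linarith

theorem LipschitzOnWith.diniFinite (hf : LipschitzOnWith L f s) (hs : s ∈ 𝓝 x) (u : E) :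
    DiniFinite f x u := by
  have hbound : ∀ᶠ t in 𝓝[>] (0 : ℝ), |diniQuot f x u t| ≤ L * ‖u‖ := by
    simpa [diniQuot] using hf.eventually_abs_diniQuot_sub_le hs u 0
  exact ⟨isBoundedUnder_of_eventually_le (hbound.mono fun t ht => (abs_le.1 ht).2),
    isBoundedUnder_of_eventually_ge (hbound.mono fun t ht => (abs_le.1 ht).1)⟩

theorem LipschitzOnWith.eventually_diniQuot_le (hf : LipschitzOnWith L f s) (hs : s ∈ 𝓝 x)
    (u v : E) : ∀ᶠ t in 𝓝[>] (0 : ℝ), diniQuot f x u t ≤ diniQuot f x v t + L * dist u v := by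
  filter_upwards [hf.eventually_abs_diniQuot_sub_le hs u v] with t ht
  rw [dist_eq_norm]
  linarith [(abs_le.1 ht).2]

theorem LipschitzOnWith.lipschitzWith_lowerDini (hf : LipschitzOnWith L f s) (hs : s ∈ 𝓝 x) :
    LipschitzWith L (lowerDini f x) :=
  LipschitzWith.of_le_add_mul L fun u v =>
    liminf_le_liminf_add_of_eventually_le (hf.diniFinite hs u).2 (hf.diniFinite hs v).1
      (hf.diniFinite hs v).2 (hf.eventually_diniQuot_le hs u v)

theorem LipschitzOnWith.lipschitzWith_upperDini (hf : LipschitzOnWith L f s) (hs : s ∈ 𝓝 x) :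
    LipschitzWith L (upperDini f x) :=
  LipschitzWith.of_le_add_mul L fun u v =>
    limsup_le_limsup_add_of_eventually_le (hf.diniFinite hs u).2 (hf.diniFinite hs v).1
      (hf.diniFinite hs v).2 (hf.eventually_diniQuot_le hs u v)

end Dini

/-- a function Lipschitz (with constant `L`) on a neighborhood of `x`
is `D⁻_M`- and `D⁺_M`-differentiable at `x`, and the modified Dini derivatives
are `L`-Lipschitz on `E`. -/
theorem lipschitz_diniM (f : E → ℝ) (x : E) (L : NNReal) (s : Set E)
    (hs : s ∈ 𝓝 x) (hf : LipschitzOnWith L f s) :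
    (∀ u : E, DiniFinite f x u) ∧
    (∀ u : E, LowerDiniMFinite f x u) ∧
    (∀ u : E, UpperDiniMFinite f x u) ∧
    LipschitzWith L (lowerDiniM f x) ∧
    LipschitzWith L (upperDiniM f x) := by
  have hlower := hf.lipschitzWith_lowerDini hs
  have hupper := hf.lipschitzWith_upperDini hs
  exact ⟨hf.diniFinite hs, hlower.bddBelow_range_sub_translate,
    hupper.bddAbove_range_sub_translate, hlower.iInf_sub_translate, hupper.iSup_sub_translate⟩
end

section
/- Suppose x̂ ∈ Ω maximizes f_0 over {x ∈ Ω : f_i(x) ≥ 0 for i = 1,…,l} where f_i(x̂) = 0 for all i = 1,…,l. Then there is no direction w ∈ E with D^- f_i(x̂)(w) > 0 simultaneously for all i ∈ {0,1,…,l}. -/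
open Filter Topology

variable {E : Type*} [NormedAddCommGroup E] [NormedSpace ℝ E]

/-- if `xh` maximizes `f 0` over the feasible set
`{x ∈ Ω : f i x ≥ 0, i ≠ 0}` and all the (active) constraints vanish at `xh`,
then there is no direction along which all lower Dini derivatives
(of the objective and of all constraints) are positive. -/
theorem no_common_ascent_direction (l : ℕ) (Ω : Set E) (hΩ : IsOpen Ω)
    (f : Fin (l + 1) → E → ℝ) (xh : E) (hx : xh ∈ Ω)
    (hzero : ∀ i : Fin (l + 1), i ≠ 0 → f i xh = 0)
    (hmax : ∀ x ∈ Ω, (∀ i : Fin (l + 1), i ≠ 0 → 0 ≤ f i x) → f 0 x ≤ f 0 xh)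
    (hfin : ∀ i u, DiniFinite (f i) xh u) :
    ¬ ∃ w : E, ∀ i : Fin (l + 1), 0 < lowerDini (f i) xh w := by

  rintro ⟨w, hw⟩
  have hpos : ∀ i : Fin (l + 1), ∀ᶠ t in 𝓝[>] (0:ℝ), 0 < diniQuot (f i) xh w t := by
    intro i
    exact eventually_lt_of_lt_liminf (hw i) ((hfin i w).2)
  have hall : ∀ᶠ t in 𝓝[>] (0:ℝ), ∀ i, 0 < diniQuot (f i) xh w t :=
    eventually_all.2 hpos
  have hmem : ∀ᶠ t in 𝓝[>] (0:ℝ), xh + t • w ∈ Ω := by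
    have h : Tendsto (fun t : ℝ => xh + t • w) (𝓝[>] 0) (𝓝 xh) := by
      have h0 : Tendsto (fun t : ℝ => xh + t • w) (𝓝 0) (𝓝 (xh + (0:ℝ) • w)) := by
        exact (continuous_const.add (continuous_id.smul continuous_const)).tendsto 0
      simpa using h0.mono_left nhdsWithin_le_nhds
    exact h.eventually (hΩ.mem_nhds hx)
  have htpos : ∀ᶠ t in 𝓝[>] (0:ℝ), (0:ℝ) < t := eventually_mem_nhdsWithin
  obtain ⟨t, ⟨hq, hΩt⟩, ht0⟩ := ((hall.and hmem).and htpos).exists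
  have hlt : ∀ i, f i xh < f i (xh + t • w) := by
    intro i
    have := hq i
    unfold diniQuot at this
    have := (div_pos_iff_of_pos_right ht0).mp this
    linarith
  have hfeas : ∀ i : Fin (l + 1), i ≠ 0 → 0 ≤ f i (xh + t • w) := fun i hi =>
    le_of_lt (by rw [← hzero i hi]; exact hlt i)
  exact absurd (hmax _ hΩt hfeas) (not_le.mpr (hlt 0))
end

section
/- Let p_0, p_1, …, p_l : E → ℝ be superlinear functionals and 1 ≤ k ≤ l. Assume: (1) there exists μ ∈ E with p_i(μ) > 0 for all i ∈ {k,…,l} (so A_k ≠ ∅), and (2) there is no u ∈ E with p_i(u) > 0 for all i ∈ {k−1,…,l} (A_{k−1} = ∅). Then for every v ∈ E, if p_i(v) ≥ 0 for all i ∈ {k,…,l}, then p_{k−1}(v) ≤ 0. -/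
variable {E : Type*} [AddCommGroup E] [Module ℝ E]

/-- A real functional is superlinear if it is positively homogeneous
and superadditive. -/
def Superlinear (p : E → ℝ) : Prop :=
  (∀ (c : ℝ), 0 ≤ c → ∀ u : E, p (c • u) = c * p u) ∧
  (∀ u v : E, p u + p v ≤ p (u + v))

/-- for superlinear functionals `p i` (`k-1 ≤ i ≤ l`), if some `μ`
makes `p i μ > 0` for all `i ∈ [k, l]`, but no `u` makes `p i u > 0` for all
`i ∈ [k-1, l]`, then any `v` with `p i v ≥ 0` for all `i ∈ [k, l]` satisfies
`p (k-1) v ≤ 0`. -/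
theorem superlinear_alternative (k l : ℕ) (hk : 1 ≤ k) (hkl : k ≤ l)
    (p : ℕ → E → ℝ)
    (hsl : ∀ i ∈ Finset.Icc (k - 1) l, Superlinear (p i))
    (h1 : ∃ μ : E, ∀ i ∈ Finset.Icc k l, 0 < p i μ)
    (h2 : ¬ ∃ u : E, ∀ i ∈ Finset.Icc (k - 1) l, 0 < p i u) :
    ∀ v : E, (∀ i ∈ Finset.Icc k l, 0 ≤ p i v) → p (k - 1) v ≤ 0 := by
  intro v hv
  by_contra hpos
  push_neg at hpos
  obtain ⟨μ, hμ⟩ := h1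
  set ε : ℝ := p (k-1) v / (1 + |p (k-1) μ|) with hε
  have hden : (0:ℝ) < 1 + |p (k-1) μ| := by positivity
  have hεpos : 0 < ε := div_pos hpos hden
  apply h2
  refine ⟨v + ε • μ, ?_⟩
  intro i hi
  obtain ⟨hsl1, hsl2⟩ := hsl i hi
  have key : p i v + ε * p i μ ≤ p i (v + ε • μ) := by
    have := hsl2 v (ε • μ)
    rwa [hsl1 ε hεpos.le μ] at this
  rcases eq_or_lt_of_le (Finset.mem_Icc.mp hi).1 with heq | hlt
  · -- i = k - 1
    have hi' : p i v + ε * p i μ > 0 := by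
      rw [← heq]
      have h1 : ε * |p (k-1) μ| < p (k-1) v := by
        rw [hε]
        rw [div_mul_eq_mul_div, div_lt_iff₀ hden]
        nlinarith [abs_nonneg (p (k-1) μ)]
      have h2 : -(ε * |p (k-1) μ|) ≤ ε * p (k-1) μ := by
        rw [← mul_neg]
        exact mul_le_mul_of_nonneg_left (neg_abs_le _) hεpos.le
      linarith
    linarith
  · -- k ≤ i
    have hik : i ∈ Finset.Icc k l := Finset.mem_Icc.mpr ⟨by omega, (Finset.mem_Icc.mp hi).2⟩
    have := hv i hik
    have := hμ i hik
    nlinarith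
end
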